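/- arXiv:2402.02024 — 2 statements merged into one kernel-verified Lean document; each statement's English description precedes it below -/
import Mathlib

section
/- Let p be a prime, let ℤ_p be the ring of p-adic integers and let Λ := ℤ_p⟦T⟧ be the ring of formal power series over ℤ_p. Let f ∈ ℤ_p[T] be a distinguished polynomial of degree d, i.e., f is monic of degree d and all of its non-leading coefficients are divisible by p. Then the quotient ring Λ/(f) (the quotient of Λ by the ideal generated by the image of f in Λ) is a free ℤ_p-module of rank d. -/
namespace QDF

open PowerSeries Finset Filter

variable {p : ℕ} [Fact p.Prime]

lemma summable_norm_pow_mul (b : ℕ → ℤ_[p]) :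
    Summable fun k => ‖(p : ℤ_[p]) ^ k * b k‖ := by
  have hp1 : 1 < (p : ℝ) := by exact_mod_cast (Fact.out : p.Prime).one_lt
  refine Summable.of_nonneg_of_le (fun k => norm_nonneg _) (fun k => ?_)
    (summable_geometric_of_lt_one (by positivity) (inv_lt_one_of_one_lt₀ hp1))
  calc ‖(p : ℤ_[p]) ^ k * b k‖ ≤ ‖(p : ℤ_[p]) ^ k‖ * ‖b k‖ := norm_mul_le _ _
    _ ≤ ‖(p : ℤ_[p]) ^ k‖ * 1 := by
        exact mul_le_mul_of_nonneg_left (PadicInt.norm_le_one _) (norm_nonneg _)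
    _ = (p : ℝ)⁻¹ ^ k := by
        rw [mul_one, PadicInt.norm_p_pow, zpow_neg, zpow_natCast, inv_pow]

lemma summable_pow_mul (b : ℕ → ℤ_[p]) :
    Summable fun k => (p : ℤ_[p]) ^ k * b k :=
  (summable_norm_pow_mul b).of_norm

lemma tsum_telescope (b : ℕ → ℤ_[p]) :
    ∑' k, ((p : ℤ_[p]) ^ k * b k - (p : ℤ_[p]) ^ (k + 1) * b (k + 1)) = b 0 := by
  set u : ℕ → ℤ_[p] := fun k => (p : ℤ_[p]) ^ k * b k with hu
  have hsum : Summable fun k => ‖u k - u (k + 1)‖ := by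
    refine Summable.of_nonneg_of_le (fun k => norm_nonneg _) (fun k => norm_sub_le _ _)
      (Summable.add (summable_norm_pow_mul b) ?_)
    exact ((summable_norm_pow_mul b).comp_injective (add_left_injective 1))
  have hu0 : Tendsto u atTop (nhds 0) := by
    rw [tendsto_zero_iff_norm_tendsto_zero]
    have hp1 : 1 < (p : ℝ) := by exact_mod_cast (Fact.out : p.Prime).one_lt
    refine squeeze_zero (fun k => norm_nonneg _) (fun k => ?_)
      (tendsto_pow_atTop_nhds_zero_of_lt_one (by positivity) (inv_lt_one_of_one_lt₀ hp1))
    calc ‖u k‖ ≤ ‖(p : ℤ_[p]) ^ k‖ * ‖b k‖ := norm_mul_le _ _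
      _ ≤ ‖(p : ℤ_[p]) ^ k‖ * 1 :=
          mul_le_mul_of_nonneg_left (PadicInt.norm_le_one _) (norm_nonneg _)
      _ = (p : ℝ)⁻¹ ^ k := by
          rw [mul_one, PadicInt.norm_p_pow, zpow_neg, zpow_natCast, inv_pow]
  have : HasSum (fun k => u k - u (k + 1)) (u 0) := by
    rw [hasSum_iff_tendsto_nat_of_summable_norm hsum]
    have : (fun n : ℕ => ∑ i ∈ range n, (u i - u (i + 1))) = fun n => u 0 - u n := by
      funext n; exact Finset.sum_range_sub' u n
    rw [this]
    simpa using (tendsto_const_nhds.sub hu0)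
  simpa [hu, pow_zero, one_mul] using this.tsum_eq

end QDF

namespace QDF

open PowerSeries Finset Filter

variable {p : ℕ} [Fact p.Prime]

lemma coeff_mul_tsum (t : ℕ → PowerSeries ℤ_[p]) (φ : PowerSeries ℤ_[p]) (n : ℕ) :
    coeff n ((mk fun m => ∑' k, (p : ℤ_[p]) ^ k * coeff m (t k)) * φ)
      = ∑' k, (p : ℤ_[p]) ^ k * coeff n (t k * φ) := by
  rw [coeff_mul]
  have step1 : ∀ ab ∈ antidiagonal n,
      coeff ab.1 (mk fun m => ∑' k, (p : ℤ_[p]) ^ k * coeff m (t k))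
        * coeff ab.2 φ
      = ∑' k, (p : ℤ_[p]) ^ k * (coeff ab.1 (t k) * coeff ab.2 φ) := by
    intro ab _
    rw [coeff_mk, ← (summable_pow_mul _).tsum_mul_right]
    exact tsum_congr fun k => by ring
  rw [Finset.sum_congr rfl step1]
  rw [← Summable.tsum_finsetSum (fun ab _ => by
    exact summable_pow_mul fun k => coeff ab.1 (t k) * coeff ab.2 φ)]
  refine tsum_congr fun k => ?_
  rw [← Finset.mul_sum, coeff_mul]

end QDF

namespace QDF

open PowerSeries Finset Filter

variable {p : ℕ} [Fact p.Prime]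

lemma exists_h {d : ℕ} {f : Polynomial ℤ_[p]} (hmonic : f.Monic) (hdeg : f.natDegree = d)
    (hdist : ∀ i < d, (p : ℤ_[p]) ∣ f.coeff i) :
    ∃ h : PowerSeries ℤ_[p],
      (f : PowerSeries ℤ_[p]) = X ^ d + (p : ℤ_[p]) • h ∧
        ∀ j, d ≤ j → coeff j h = 0 := by
  have hzero : ∀ j, d ≤ j →
      coeff j ((f : PowerSeries ℤ_[p]) - X ^ d) = 0 := by
    intro j hj
    rw [map_sub, Polynomial.coeff_coe, coeff_X_pow]
    have hfd : f.coeff d = 1 := by rw [← hdeg]; exact hmonic.coeff_natDegree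
    rcases eq_or_lt_of_le hj with heq | hlt
    · rw [if_pos heq.symm, ← heq, hfd, sub_self]
    · rw [if_neg hlt.ne', Polynomial.coeff_eq_zero_of_natDegree_lt (hdeg ▸ hlt), sub_zero]
  have hc : ∀ j, ∃ c, coeff j ((f : PowerSeries ℤ_[p]) - X ^ d) = (p : ℤ_[p]) * c := by
    intro j
    rcases lt_or_ge j d with hj | hj
    · obtain ⟨c, hc⟩ := hdist j hj
      refine ⟨c, ?_⟩
      rw [map_sub, Polynomial.coeff_coe, coeff_X_pow, if_neg hj.ne, sub_zero, hc]
    · exact ⟨0, by rw [hzero j hj, mul_zero]⟩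
  refine ⟨mk fun j => (hc j).choose, ?_, ?_⟩
  · ext j
    have := (hc j).choose_spec
    rw [map_add, coeff_smul, coeff_mk, smul_eq_mul, ← this, map_sub, coeff_X_pow]
    ring
  · intro j hj
    have h1 : (p : ℤ_[p]) * (hc j).choose = 0 := by
      rw [← (hc j).choose_spec]; exact hzero j hj
    have hp0 : (p : ℤ_[p]) ≠ 0 := by
      exact_mod_cast (Nat.cast_ne_zero (R := ℤ_[p])).mpr (Fact.out : p.Prime).ne_zero
    simp only [coeff_mk]
    exact (mul_eq_zero.mp h1).resolve_left hp0

end QDF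

namespace QDF

open PowerSeries Finset Filter

variable {p : ℕ} [Fact p.Prime]

lemma div_exists (d : ℕ) (h : PowerSeries ℤ_[p]) (g : PowerSeries ℤ_[p]) :
    ∃ q : PowerSeries ℤ_[p], ∀ n, d ≤ n →
      coeff n (g - q * (X ^ d + (p : ℤ_[p]) • h)) = 0 := by
  set T : PowerSeries ℤ_[p] → PowerSeries ℤ_[p] :=
    fun s => mk fun m => coeff (m + d) s with hT
  set G : ℕ → PowerSeries ℤ_[p] :=
    fun k => Nat.rec g (fun _ Gk => -(T Gk * h)) k with hG
  have hG0 : G 0 = g := rfl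
  have hGs : ∀ k, G (k + 1) = -(T (G k) * h) := fun k => rfl
  refine ⟨mk fun m => ∑' k, (p : ℤ_[p]) ^ k * coeff m (T (G k)), fun n hn => ?_⟩
  obtain ⟨m, rfl⟩ : ∃ m, n = m + d := ⟨n - d, (Nat.sub_add_cancel hn).symm⟩
  have hTG : ∀ k, coeff m (T (G k)) = coeff (m + d) (G k) := fun k => coeff_mk _ _
  have e1 : coeff (m + d)
      ((mk fun m => ∑' k, (p : ℤ_[p]) ^ k * coeff m (T (G k))) * X ^ d)
      = ∑' k, (p : ℤ_[p]) ^ k * coeff (m + d) (G k) := by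
    rw [coeff_mul_X_pow, coeff_mk]
    exact tsum_congr fun k => by rw [hTG]
  have e2 : coeff (m + d)
      ((mk fun m => ∑' k, (p : ℤ_[p]) ^ k * coeff m (T (G k))) * ((p : ℤ_[p]) • h))
      = ∑' k, (p : ℤ_[p]) ^ (k + 1) * (- coeff (m + d) (G (k + 1))) := by
    rw [mul_smul_comm, coeff_smul, coeff_mul_tsum, smul_eq_mul,
      ← (summable_pow_mul _).tsum_mul_left]
    refine tsum_congr fun k => ?_
    have : coeff (m + d) (T (G k) * h) = - coeff (m + d) (G (k + 1)) := by
      rw [hGs k, map_neg, neg_neg]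
    rw [this]; ring
  have hs1 : Summable fun k => (p : ℤ_[p]) ^ k * coeff (m + d) (G k) :=
    summable_pow_mul _
  have hs2 : Summable fun k => (p : ℤ_[p]) ^ (k + 1) * (- coeff (m + d) (G (k + 1))) := by
    have := summable_pow_mul fun k => (p : ℤ_[p]) * (- coeff (m + d) (G (k + 1)))
    refine this.congr fun k => ?_
    ring
  rw [map_sub, mul_add, map_add, e1, e2, ← Summable.tsum_add hs1 hs2]
  have : ∑' k, ((p : ℤ_[p]) ^ k * coeff (m + d) (G k)
      + (p : ℤ_[p]) ^ (k + 1) * (- coeff (m + d) (G (k + 1))))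
      = coeff (m + d) (G 0) := by
    rw [← tsum_telescope (fun k => coeff (m + d) (G k))]
    exact tsum_congr fun k => by ring
  rw [this, hG0, sub_self]

end QDF

namespace QDF

open PowerSeries Finset Filter

variable {p : ℕ} [Fact p.Prime]

lemma eq_zero_of_forall_pow_dvd (x : ℤ_[p]) (hx : ∀ k : ℕ, (p : ℤ_[p]) ^ k ∣ x) : x = 0 := by
  have hp1 : 1 < (p : ℝ) := by exact_mod_cast (Fact.out : p.Prime).one_lt
  have hb : ∀ k : ℕ, ‖x‖ ≤ (p : ℝ)⁻¹ ^ k := by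
    intro k
    obtain ⟨c, rfl⟩ := hx k
    calc ‖(p : ℤ_[p]) ^ k * c‖ ≤ ‖(p : ℤ_[p]) ^ k‖ * ‖c‖ := norm_mul_le _ _
      _ ≤ ‖(p : ℤ_[p]) ^ k‖ * 1 :=
          mul_le_mul_of_nonneg_left (PadicInt.norm_le_one _) (norm_nonneg _)
      _ = (p : ℝ)⁻¹ ^ k := by
          rw [mul_one, PadicInt.norm_p_pow, zpow_neg, zpow_natCast, inv_pow]
  have h0 : ‖x‖ ≤ 0 :=
    ge_of_tendsto' (tendsto_pow_atTop_nhds_zero_of_lt_one (by positivity)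
      (inv_lt_one_of_one_lt₀ hp1)) hb
  simpa using le_antisymm h0 (norm_nonneg _)

lemma div_unique (d : ℕ) (h : PowerSeries ℤ_[p]) (q : PowerSeries ℤ_[p])
    (hq : ∀ n, d ≤ n → coeff n (q * (X ^ d + (p : ℤ_[p]) • h)) = 0) : q = 0 := by
  have key : ∀ k m, (p : ℤ_[p]) ^ k ∣ coeff m q := by
    intro k
    induction k with
    | zero => intro m; simp
    | succ k ih =>
      intro m
      have h0 := hq (m + d) le_add_self
      rw [mul_add, map_add, coeff_mul_X_pow, mul_smul_comm, coeff_smul, smul_eq_mul] at h0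
      have : coeff m q = -((p : ℤ_[p]) * coeff (m + d) (q * h)) := by
        linear_combination h0
      rw [this, dvd_neg, pow_succ, mul_comm ((p : ℤ_[p]) ^ k) (p : ℤ_[p])]
      refine mul_dvd_mul dvd_rfl ?_
      rw [coeff_mul]
      exact Finset.dvd_sum fun ab _ => (ih ab.1).mul_right _
  ext m
  rw [map_zero]
  exact eq_zero_of_forall_pow_dvd _ fun k => key k m

end QDF

namespace QDF

open PowerSeries Finset Filter

variable {p : ℕ} [Fact p.Prime]

/-- The linear map sending `(a_0, …, a_{d-1})` to `∑ a_i X^i`. -/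
noncomputable def ell (p : ℕ) [Fact p.Prime] (d : ℕ) :
    (Fin d → ℤ_[p]) →ₗ[ℤ_[p]] PowerSeries ℤ_[p] where
  toFun a := ∑ i : Fin d, a i • (X : PowerSeries ℤ_[p]) ^ (i : ℕ)
  map_add' a b := by
    rw [← Finset.sum_add_distrib]
    exact Finset.sum_congr rfl fun i _ => by rw [Pi.add_apply, add_smul]
  map_smul' c a := by
    simp only [RingHom.id_apply, Finset.smul_sum, Pi.smul_apply, smul_smul, smul_eq_mul]

lemma coeff_ell (d : ℕ) (a : Fin d → ℤ_[p]) (n : ℕ) :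
    coeff n (ell p d a) = if hn : n < d then a ⟨n, hn⟩ else 0 := by
  show coeff n (∑ i : Fin d, a i • (X : PowerSeries ℤ_[p]) ^ (i : ℕ)) = _
  rw [map_sum]
  simp only [coeff_smul, coeff_X_pow, smul_eq_mul, mul_ite, mul_one, mul_zero]
  split
  · next hn =>
    rw [Finset.sum_eq_single (⟨n, hn⟩ : Fin d)]
    · rw [if_pos rfl]
    · intro i _ hi
      rw [if_neg]
      exact fun hni => hi (by ext; simp [← hni])
    · intro habs; exact absurd (Finset.mem_univ _) habs
  · next hn =>
    refine Finset.sum_eq_zero fun i _ => ?_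
    rw [if_neg]
    exact fun hni => hn (hni ▸ i.isLt)

lemma mem_range_ell_iff (d : ℕ) (s : PowerSeries ℤ_[p]) :
    s ∈ LinearMap.range (ell p d) ↔ ∀ n, d ≤ n → coeff n s = 0 := by
  constructor
  · rintro ⟨a, rfl⟩ n hn
    rw [coeff_ell, dif_neg (by omega)]
  · intro hs
    refine ⟨fun i => coeff i s, ?_⟩
    ext n
    rw [coeff_ell]
    split
    · rfl
    · next hn => exact (hs n (by omega)).symm

lemma ell_injective (d : ℕ) : Function.Injective (ell p d) := by
  rw [injective_iff_map_eq_zero]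
  intro a ha
  funext i
  have := congrArg (coeff (i : ℕ)) ha
  rw [coeff_ell, dif_pos i.isLt, map_zero] at this
  simpa using this

end QDF

set_option maxHeartbeats 1000000 in
open PowerSeries QDF in
/-- If `f ∈ ℤ_p[T]` is a distinguished polynomial of degree `d` (monic of degree `d`, with all
non-leading coefficients divisible by `p`), then `Λ/(f)` is a free `ℤ_p`-module of rank `d`,
where `Λ = ℤ_p⟦T⟧`. -/
theorem quotient_by_distinguished_free (p : ℕ) [Fact p.Prime] (d : ℕ) (f : Polynomial ℤ_[p])
    (hmonic : f.Monic) (hdeg : f.natDegree = d)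
    (hdist : ∀ i < d, (p : ℤ_[p]) ∣ f.coeff i) :
    Module.Free ℤ_[p]
      (PowerSeries ℤ_[p] ⧸ Ideal.span {(f : PowerSeries ℤ_[p])}) ∧
    Module.finrank ℤ_[p]
      (PowerSeries ℤ_[p] ⧸ Ideal.span {(f : PowerSeries ℤ_[p])}) = d := by
  obtain ⟨h, hF, -⟩ := exists_h hmonic hdeg hdist
  set F : PowerSeries ℤ_[p] := (f : PowerSeries ℤ_[p]) with hFdef
  set I : Submodule ℤ_[p] (PowerSeries ℤ_[p]) :=
    (Ideal.span {F}).restrictScalars ℤ_[p] with hI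
  set M : Submodule ℤ_[p] (PowerSeries ℤ_[p]) := LinearMap.range (ell p d) with hM
  have hdisj : Disjoint I M := by
    rw [Submodule.disjoint_def]
    intro x hxI hxM
    obtain ⟨q, rfl⟩ := Ideal.mem_span_singleton'.mp hxI
    have hq0 : q = 0 := by
      refine div_unique d h q fun n hn => ?_
      rw [← hF]
      exact (mem_range_ell_iff d _).mp hxM n hn
    rw [hq0, zero_mul]
  have hcodis : Codisjoint I M := by
    rw [codisjoint_iff, eq_top_iff]
    rintro g -
    obtain ⟨q, hq⟩ := div_exists d h g
    refine Submodule.mem_sup.mpr ⟨q * F, Ideal.mem_span_singleton'.mpr ⟨q, rfl⟩,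
      g - q * F, ?_, by ring⟩
    refine (mem_range_ell_iff d _).mpr fun n hn => ?_
    rw [hF]
    exact hq n hn
  have hcompl : IsCompl I M := ⟨hdisj, hcodis⟩
  have e1 : (PowerSeries ℤ_[p] ⧸ Ideal.span {F}) ≃ₗ[ℤ_[p]]
      (PowerSeries ℤ_[p] ⧸ I) :=
    (Submodule.Quotient.restrictScalarsEquiv ℤ_[p] (Ideal.span {F})).symm
  have e2 : (PowerSeries ℤ_[p] ⧸ I) ≃ₗ[ℤ_[p]] M :=
    I.quotientEquivOfIsCompl M hcompl
  have e3 : M ≃ₗ[ℤ_[p]] (Fin d → ℤ_[p]) :=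
    (LinearEquiv.ofInjective (ell p d) (ell_injective d)).symm
  have E := e1.trans (e2.trans e3)
  exact ⟨Module.Free.of_equiv E.symm, by rw [E.finrank_eq, Module.finrank_fin_fun]⟩
end

section
/- Let p be a prime, let ℤ_p be the ring of p-adic integers and let Λ := ℤ_p⟦T⟧ be the ring of formal power series over ℤ_p. Let M be a finitely generated Λ-module. If M, viewed as a ℤ_p-module via the structural inclusion ℤ_p → Λ, is finitely generated over ℤ_p, then M is a torsion Λ-module, i.e., every element of M is annihilated by some nonzero element of Λ. -/
/-- Let `Λ = ℤ_p⟦T⟧` and let `M` be a finitely generated `Λ`-module. If `M` is finitely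
generated as a `ℤ_p`-module (via the structural inclusion `ℤ_p → Λ`), then `M` is a torsion
`Λ`-module: every element of `M` is annihilated by some nonzero element of `Λ`. -/
theorem torsion_of_finite_over_Zp (p : ℕ) [Fact p.Prime] (M : Type*) [AddCommGroup M]
    [Module (PowerSeries ℤ_[p]) M] [Module ℤ_[p] M]
    [IsScalarTower ℤ_[p] (PowerSeries ℤ_[p]) M]
    [Module.Finite (PowerSeries ℤ_[p]) M]
    (h : Module.Finite ℤ_[p] M) :
    ∀ x : M, ∃ a : PowerSeries ℤ_[p], a ≠ 0 ∧ a • x = 0 := by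
  intro x
  -- the endomorphism "multiplication by T"
  set f : Module.End ℤ_[p] M :=
    { toFun := fun m => (PowerSeries.X : PowerSeries ℤ_[p]) • m
      map_add' := fun m n => smul_add _ m n
      map_smul' := fun c m => by
        simp only [RingHom.id_apply]
        rw [← algebraMap_smul (PowerSeries ℤ_[p]) c m, ← mul_smul, mul_comm, mul_smul,
          algebraMap_smul] } with hf
  have hint : IsIntegral ℤ_[p] f := Algebra.IsIntegral.isIntegral f
  obtain ⟨q, hq, haq⟩ := hint
  refine ⟨(q : PowerSeries ℤ_[p]), ?_, ?_⟩
  · rw [Ne, Polynomial.coe_eq_zero_iff]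
    exact hq.ne_zero
  · have key : ∀ r : Polynomial ℤ_[p], (r : PowerSeries ℤ_[p]) • x = (Polynomial.aeval f r) x := by
      intro r
      induction r using Polynomial.induction_on' with
      | add a b ha hb =>
          rw [Polynomial.coe_add, add_smul, ha, hb, map_add, LinearMap.add_apply]
      | monomial n a =>
          have hpow : ∀ (k : ℕ) (y : M),
              (f ^ k) y = ((PowerSeries.X : PowerSeries ℤ_[p]) ^ k) • y := by
            intro k
            induction k with
            | zero => intro y; simp
            | succ k ih =>
                intro y
                rw [pow_succ, Module.End.mul_apply, ih, pow_succ, mul_smul]; rfl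
          rw [Polynomial.aeval_monomial]
          have : ((Polynomial.monomial n a : Polynomial ℤ_[p]) : PowerSeries ℤ_[p])
              = PowerSeries.C (R := ℤ_[p]) a * PowerSeries.X ^ n := by
            rw [← Polynomial.coe_C, ← Polynomial.coe_X, ← Polynomial.coe_pow,
              ← Polynomial.coe_mul, Polynomial.C_mul_X_pow_eq_monomial]
          rw [this, mul_smul, ← hpow n x, Module.End.mul_apply]
          have hC : (PowerSeries.C (R := ℤ_[p]) a) • ((f ^ n) x) = a • ((f ^ n) x) := by
            have : (PowerSeries.C (R := ℤ_[p])) a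
                = algebraMap ℤ_[p] (PowerSeries ℤ_[p]) a := rfl
            rw [this, algebraMap_smul]
          rw [hC]
          simp [Module.algebraMap_end_apply]
    have h0 : (Polynomial.aeval f) q = 0 := haq
    rw [key, h0, LinearMap.zero_apply]
end
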